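/- For all u, v ∈ M(X) ⊆ FN(X), the coproduct satisfies Δ(u ⋄ v) = Δ(u) ⋄ Δ(v). -/

import Mathlib

open scoped TensorProduct

universe u v w

/-- Letters of bracketed words in `X`: either a variable from `X` or a bracket
`⌊u⌋` enclosing a (bracketed) word `u`. Lists of letters are exactly the bracketed
words, i.e. the elements of the free operated monoid `𝔐(X)`. -/
inductive Lt (X : Type u) : Type u
  | var : X → Lt X
  | brk : List (Lt X) → Lt X

namespace Nij

noncomputable section

variable {X : Type u}

/-- Two letters may be adjacent in an "alternating" word iff they are not both brackets. -/
def altP : Lt X → Lt X → Prop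
  | Lt.brk _, Lt.brk _ => False
  | _, _ => True

/-- A letter is good (i.e. lies in `X ⊔ ⌊𝔛_∞⌋`) if each bracket encloses a word whose
letters are good and in which no two consecutive letters are brackets. -/
inductive GoodL : Lt X → Prop
  | var (x : X) : GoodL (Lt.var x)
  | brk (u : List (Lt X)) (h1 : ∀ a ∈ u, GoodL a) (h2 : List.Chain' altP u) :
      GoodL (Lt.brk u)

/-- The words in `𝔛_∞`: all letters good and no two consecutive brackets. -/
def GoodW (w : List (Lt X)) : Prop := (∀ a ∈ w, GoodL a) ∧ List.Chain' altP w

/-- The set `𝔛_∞` of basis words of the free Nijenhuis algebra. -/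
def NW (X : Type u) : Type u := {w : List (Lt X) // GoodW w}

/-- The free Nijenhuis algebra `FN(X) = k𝔛_∞` as a `k`-module. -/
abbrev FN (k : Type v) [CommRing k] (X : Type u) : Type (max u v) := NW X →₀ k

/-- The empty word `1 ∈ 𝔛_∞`. -/
def one : NW X := ⟨[], ⟨by simp, List.isChain_nil⟩⟩

/-- A single good letter forms a good word. -/
lemma goodW_singleton {a : Lt X} (h : GoodL a) : GoodW [a] := by
  constructor
  · intro b hb
    rw [List.mem_singleton] at hb
    exact hb ▸ h
  · exact List.isChain_singleton _

/-- The single-letter word `x ∈ 𝔛_∞` for `x ∈ X`. -/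
def varW (x : X) : NW X := ⟨[Lt.var x], goodW_singleton (GoodL.var x)⟩

/-- The word `⌊w⌋ ∈ 𝔛_∞` for `w ∈ 𝔛_∞`. -/
def NopW (w : NW X) : NW X := ⟨[Lt.brk w.1], goodW_singleton (GoodL.brk _ w.2.1 w.2.2)⟩

/-- The single-letter word `[a] ∈ 𝔛_∞` for a good letter `a ∈ X ⊔ ⌊𝔛_∞⌋`. -/
def letterW (a : Lt X) (h : GoodL a) : NW X := ⟨[a], goodW_singleton h⟩

variable (k : Type v) [CommRing k]

/-- The basis element of `FN(X)` corresponding to `w ∈ 𝔛_∞`. -/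
def bw (w : NW X) : FN k X := Finsupp.single w 1

/-- The Nijenhuis operator `N_X` on `FN(X)`, the linear extension of `w ↦ ⌊w⌋`. -/
def Nop : FN k X →ₗ[k] FN k X := Finsupp.lmapDomain k k NopW

/-- The natural linear embedding `k𝔛_∞ → k𝔐(X)` into the monoid algebra of the free
monoid of bracketed words, used to express concatenation of words linearly. -/
def iota : FN k X →ₗ[k] MonoidAlgebra k (FreeMonoid (Lt X)) :=
  (MonoidAlgebra.coeffLinearEquiv k).symm.toLinearMap ∘ₗ
    Finsupp.lmapDomain k k (fun w : NW X => FreeMonoid.ofList w.1)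

/-- The left counit `ε : FN(X) → k`, `ε(1) = 1` and `ε(w) = 0` for `1 ≠ w ∈ 𝔛_∞`. -/
def eps : FN k X →ₗ[k] k := Finsupp.lapply one

/-- A specification of the product `⋄` on `FN(X) = k𝔛_∞`: a `k`-bilinear map satisfying
the defining recursive equations of the paper. These equations determine `⋄` uniquely.

* `concat`: if the last letter of `u` and the first letter of `v` are not both brackets
  (in particular if `u` or `v` is empty), then `u ⋄ v` is the concatenation `uv`.
* `brkbrk`: `⌊ū⌋ ⋄ ⌊v̄⌋ = ⌊ū ⋄ ⌊v̄⌋⌋ + ⌊⌊ū⌋ ⋄ v̄⌋ − ⌊⌊ū ⋄ v̄⌋⌋`.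
* `split`: if `u = u₀a` and `v = bv₀` then `u ⋄ v = u₀ (a ⋄ b) v₀`, the outer products
  being concatenation (expressed in the monoid algebra `k𝔐(X)` via `iota`). -/
structure DiamondSpec (k : Type v) (X : Type u) [CommRing k] where
  mul : FN k X →ₗ[k] FN k X →ₗ[k] FN k X
  concat : ∀ u v : NW X,
    (¬ ∃ (a b : List (Lt X)), u.1.getLast? = some (Lt.brk a) ∧ v.1.head? = some (Lt.brk b)) →
    iota k (mul (bw k u) (bw k v)) = iota k (bw k u) * iota k (bw k v)
  brkbrk : ∀ u v : NW X,
    mul (Nop k (bw k u)) (Nop k (bw k v)) =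
      Nop k (mul (bw k u) (Nop k (bw k v))) + Nop k (mul (Nop k (bw k u)) (bw k v))
        - Nop k (Nop k (mul (bw k u) (bw k v)))
  split : ∀ (u v : NW X) (u₀ v₀ : List (Lt X)) (a b : Lt X)
      (ha : GoodW [a]) (hb : GoodW [b]),
      u.1 = u₀ ++ [a] → v.1 = b :: v₀ →
      iota k (mul (bw k u) (bw k v)) =
        MonoidAlgebra.of k (FreeMonoid (Lt X)) (FreeMonoid.ofList u₀) *
          iota k (mul (bw k ⟨[a], ha⟩) (bw k ⟨[b], hb⟩)) *
          MonoidAlgebra.of k (FreeMonoid (Lt X)) (FreeMonoid.ofList v₀)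

/-- The componentwise product on `FN(X) ⊗ FN(X)` induced by `⋄`:
`(a ⊗ b) ⋄ (c ⊗ d) = (a ⋄ c) ⊗ (b ⋄ d)`. -/
def mul2 (d : DiamondSpec k X) :
    (FN k X ⊗[k] FN k X) →ₗ[k] (FN k X ⊗[k] FN k X) →ₗ[k] (FN k X ⊗[k] FN k X) :=
  TensorProduct.lift <| LinearMap.mk₂ k
    (fun a b => TensorProduct.map (d.mul a) (d.mul b))
    (fun a a' b => by simp only [map_add, TensorProduct.map_add_left])
    (fun c a b => by simp only [map_smul, TensorProduct.map_smul_left])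
    (fun a b b' => by simp only [map_add, TensorProduct.map_add_right])
    (fun c a b => by simp only [map_smul, TensorProduct.map_smul_right])

/-- A specification of the coproduct `Δ` on `FN(X)`: a `k`-linear map satisfying the
defining equations of the paper. These equations determine `Δ` uniquely.

* `delta_one`: `Δ(1) = 1 ⊗ 1`;
* `delta_var`: `Δ(x) = 1 ⊗ x` for `x ∈ X`;
* `delta_brk`: `Δ(⌊w⌋) = (id ⊗ N_X) Δ(w)` (the 1-cocycle condition on basis elements);
* `delta_split`: `Δ(w₁ ⋄ ⋯ ⋄ w_m) = Δ(w₁) ⋄ (Δ(w₂) ⋄ ⋯ ⋄ Δ(w_m))` for the alternating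
  `⋄`-factorization of a word into its letters, stated in its binary recursive form. -/
structure DeltaSpec (k : Type v) (X : Type u) [CommRing k] extends DiamondSpec k X where
  delta : FN k X →ₗ[k] FN k X ⊗[k] FN k X
  delta_one : delta (bw k one) = bw k one ⊗ₜ[k] bw k one
  delta_var : ∀ x : X, delta (bw k (varW x)) = bw k one ⊗ₜ[k] bw k (varW x)
  delta_brk : ∀ w : NW X,
    delta (Nop k (bw k w)) = LinearMap.lTensor (FN k X) (Nop k) (delta (bw k w))
  delta_split : ∀ (w : NW X) (a : Lt X) (rest : List (Lt X))
      (ha : GoodW [a]) (hrest : GoodW rest), w.1 = a :: rest → rest ≠ [] →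
      delta (bw k w) =
        mul2 k toDiamondSpec (delta (bw k ⟨[a], ha⟩)) (delta (bw k ⟨rest, hrest⟩))

/-- The product `w₁ ⋄ w₂ ⋄ ⋯ ⋄ w_m ∈ FN(X)` of a sequence of letters from `X ⊔ ⌊𝔛_∞⌋`
(the empty product being `1`). -/
def prodOf (d : DiamondSpec k X) : (l : List (Lt X)) → (∀ a ∈ l, GoodL a) → FN k X
  | [], _ => bw k one
  | a :: rest, h =>
      d.mul (bw k (letterW a (h a List.mem_cons_self)))
        (prodOf d rest (fun b hb => h b (List.mem_cons_of_mem a hb)))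

mutual
  /-- The degree of a letter: `deg(x) = 1` for `x ∈ X`, `deg(⌊u⌋) = 1 + deg(u)`. -/
  def degL : Lt X → ℕ
    | Lt.var _ => 1
    | Lt.brk u => 1 + degList u
  /-- The degree of a bracketed word: the total number of occurrences of elements of `X`
  and of brackets `⌊·⌋` in it. -/
  def degList : List (Lt X) → ℕ
    | [] => 0
    | a :: rest => degL a + degList rest
end

/-- The homogeneous component `FN^(n)`: the `k`-span of the basis words of degree `n`. -/
def FNdeg (n : ℕ) : Submodule k (FN k X) :=
  Submodule.span k {f | ∃ w : NW X, degList w.1 = n ∧ f = bw k w}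

/-- The image `A ⊗ B` of the tensor product of two submodules inside `M ⊗ M`. -/
def tsub {M : Type w} [AddCommGroup M] [Module k M] (A B : Submodule k M) :
    Submodule k (M ⊗[k] M) :=
  Submodule.span k {x | ∃ a ∈ A, ∃ b ∈ B, x = a ⊗ₜ[k] b}

/-! On bracket-free words `⋄` is plain concatenation, and `Δ(w) = 1 ⊗ w` by induction on the
length of `w`, peeling off the first letter with `delta_split`. Hence both sides of the identity
equal `1 ⊗ uv`. -/

lemma altP_var_left (x : X) (b : Lt X) : altP (Lt.var x) b := by
  cases b <;> trivial

lemma goodW_of_forall_var {l : List (Lt X)} (hl : ∀ a ∈ l, ∃ x : X, a = Lt.var x) :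
    GoodW l := by
  refine ⟨fun a ha => ?_, (List.pairwise_of_forall_mem_list fun a ha b _ => ?_).isChain⟩
  · obtain ⟨x, rfl⟩ := hl a ha
    exact GoodL.var x
  · obtain ⟨x, rfl⟩ := hl a ha
    exact altP_var_left x b

lemma getLast?_ne_brk_of_forall_var {l : List (Lt X)} (hl : ∀ a ∈ l, ∃ x : X, a = Lt.var x)
    (b : List (Lt X)) : l.getLast? ≠ some (Lt.brk b) := fun h => by
  obtain ⟨x, hx⟩ := hl _ (List.mem_of_getLast? h)
  cases hx

lemma iota_injective : Function.Injective (iota k (X := X)) := by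
  have hword : Function.Injective (fun w : NW X => FreeMonoid.ofList w.1) :=
    fun _ _ h => Subtype.ext (FreeMonoid.ofList.injective h)
  exact (MonoidAlgebra.coeffLinearEquiv k).symm.injective.comp
    (Finsupp.mapDomain_injective hword)

lemma iota_bw (w : NW X) :
    iota k (bw k w) = MonoidAlgebra.single (FreeMonoid.ofList w.1) (1 : k) :=
  congrArg MonoidAlgebra.ofCoeff Finsupp.mapDomain_single

variable {k}

lemma DiamondSpec.mul_bw_of_forall_var_left (d : DiamondSpec k X) (u v : NW X)
    (hu : ∀ a ∈ u.1, ∃ x : X, a = Lt.var x) (huv : GoodW (u.1 ++ v.1)) :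
    d.mul (bw k u) (bw k v) = bw k ⟨u.1 ++ v.1, huv⟩ := by
  have hconcat := d.concat u v fun ⟨a, _, ha, _⟩ => getLast?_ne_brk_of_forall_var hu a ha
  apply iota_injective k
  rw [hconcat, iota_bw, iota_bw, iota_bw k ⟨u.1 ++ v.1, huv⟩, MonoidAlgebra.single_mul_single,
    mul_one, FreeMonoid.ofList_append]

lemma DiamondSpec.bw_one_mul (d : DiamondSpec k X) (w : NW X) :
    d.mul (bw k one) (bw k w) = bw k w :=
  d.mul_bw_of_forall_var_left one w (by simp [one]) w.2

lemma mul2_tmul (d : DiamondSpec k X) (a b c e : FN k X) :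
    mul2 k d (a ⊗ₜ[k] b) (c ⊗ₜ[k] e) = d.mul a c ⊗ₜ[k] d.mul b e :=
  rfl

lemma DeltaSpec.delta_bw_var_cons (ds : DeltaSpec k X) (x : X) (l : List (Lt X))
    (hxl : GoodW (Lt.var x :: l)) (hl : GoodW l)
    (ih : ds.delta (bw k ⟨l, hl⟩) = bw k one ⊗ₜ[k] bw k ⟨l, hl⟩) :
    ds.delta (bw k ⟨Lt.var x :: l, hxl⟩) = bw k one ⊗ₜ[k] bw k ⟨Lt.var x :: l, hxl⟩ := by
  rcases eq_or_ne l [] with rfl | hne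
  · exact ds.delta_var x
  have hsplit := ds.delta_split ⟨_, hxl⟩ (Lt.var x) l (varW x).2 hl rfl hne
  have hx : ds.delta (bw k ⟨[Lt.var x], (varW x).2⟩) = bw k one ⊗ₜ[k] bw k (varW x) :=
    ds.delta_var x
  rw [hsplit, hx, ih, mul2_tmul, ds.bw_one_mul,
    ds.mul_bw_of_forall_var_left (varW x) ⟨l, hl⟩ (by simp [varW]) hxl]
  rfl

lemma DeltaSpec.delta_bw_of_forall_var (ds : DeltaSpec k X) (w : NW X)
    (hw : ∀ a ∈ w.1, ∃ x : X, a = Lt.var x) :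
    ds.delta (bw k w) = bw k one ⊗ₜ[k] bw k w := by
  obtain ⟨l, hl⟩ := w
  induction l with
  | nil => exact ds.delta_one
  | cons a l ih =>
    obtain ⟨x, rfl⟩ := hw a List.mem_cons_self
    have hw' : ∀ b ∈ l, ∃ y : X, b = Lt.var y := fun b hb => hw b (List.mem_cons_of_mem _ hb)
    exact ds.delta_bw_var_cons x l hl (goodW_of_forall_var hw') (ih _ hw')

/-- for all `u, v ∈ M(X) ⊆ FN(X)` (bracket-free words),
`Δ(u ⋄ v) = Δ(u) ⋄ Δ(v)`, the product on `FN(X) ⊗ FN(X)` being componentwise. -/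
theorem stmt5_delta_mult_on_words (k : Type v) [CommRing k] {X : Type u}
    (ds : DeltaSpec k X) (u v : NW X)
    (hu : ∀ a ∈ u.1, ∃ x : X, a = Lt.var x) (hv : ∀ a ∈ v.1, ∃ x : X, a = Lt.var x) :
    ds.delta (ds.mul (bw k u) (bw k v)) =
      mul2 k ds.toDiamondSpec (ds.delta (bw k u)) (ds.delta (bw k v)) := by
  have huv : ∀ a ∈ u.1 ++ v.1, ∃ x : X, a = Lt.var x := fun a ha =>
    (List.mem_append.1 ha).elim (hu a) (hv a)
  have hgood : GoodW (u.1 ++ v.1) := goodW_of_forall_var huv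
  have hconcat := ds.mul_bw_of_forall_var_left u v hu hgood
  rw [hconcat, ds.delta_bw_of_forall_var ⟨_, hgood⟩ huv, ds.delta_bw_of_forall_var u hu,
    ds.delta_bw_of_forall_var v hv, mul2_tmul, ds.bw_one_mul, hconcat]

end

end Nij
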